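/- arXiv:2411.07651 — 2 statements merged into one kernel-verified Lean document; each statement's English description precedes it below -/
import Mathlib

section
/- Let g be a probability mass function on the finite grid Θ_d = {ϑ_1,…,ϑ_d} ⊂ (0,∞) with g(ϑ_j) > 0 for all j, and define the d×d matrix V with entries V_{i,j} = ∑_{z∈ℕ} g(ϑ_i|z) g(ϑ_j|z) p_g(z) − g(ϑ_i) g(ϑ_j), where g(ϑ_i|z) = k(z|ϑ_i)g(ϑ_i)/p_g(z). Then the (d−1)×(d−1) leading principal submatrix of V is positive definite. -/
/-- The Poisson kernel `k(y|θ) = e^{-θ} θ^y / y!`. -/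
noncomputable def poissonK (θ : ℝ) (y : ℕ) : ℝ :=
  Real.exp (-θ) * θ ^ y / (Nat.factorial y)

/-- The discrete Poisson mixture `p_g(z) = ∑_j k(z|ϑ_j) g_j`. -/
noncomputable def pf {d : ℕ} (ϑ : Fin d → ℝ) (g : Fin d → ℝ) (z : ℕ) : ℝ :=
  ∑ j, poissonK (ϑ j) z * g j

/-!
The quadratic form `xᵀ V x` is the variance of `∑ᵢ xᵢ g(ϑᵢ|Z)` under `Z ∼ p_g`, so it
vanishes only if `∑ᵢ xᵢ k(·|ϑᵢ) g(ϑᵢ) = c · p_g` for a constant `c`. Since the last grid point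
is left out of the submatrix, the coefficient of `k(·|ϑ_d)` in this relation is `-c g(ϑ_d)`;
the Poisson kernels at distinct points are linearly independent (a Vandermonde argument on the
moments `ϑʲ`), which forces `c = 0` and then `x = 0`.
-/

open Finset Matrix

section DiscreteCovariance

variable {α ι : Type*}

/-- The covariance matrix of the random vector `(q i Z)ᵢ` for `Z` with mass function `p`. -/
noncomputable def discreteCovMatrix (p : α → ℝ) (q : ι → α → ℝ) : Matrix ι ι ℝ :=
  Matrix.of fun i j => ∑' z, q i z * q j z * p z - (∑' z, q i z * p z) * (∑' z, q j z * p z)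

lemma discreteCovMatrix_isHermitian (p : α → ℝ) (q : ι → α → ℝ) :
    (discreteCovMatrix p q).IsHermitian := by
  ext i j
  simp only [discreteCovMatrix, conjTranspose_apply, of_apply, star_trivial]
  rw [mul_comm (∑' z, q j z * p z)]
  congr 1
  exact tsum_congr fun z => by ring

variable [Fintype ι] {p : α → ℝ} {q : ι → α → ℝ}

lemma hasSum_dotProduct_discreteCovMatrix_mulVec (hp : HasSum p 1)
    (hq : ∀ i, Summable fun z => q i z * p z)
    (hqq : ∀ i j, Summable fun z => q i z * q j z * p z) (x : ι → ℝ) :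
    HasSum (fun z => (∑ i, x i * q i z - ∑ i, x i * ∑' w, q i w * p w) ^ 2 * p z)
      (x ⬝ᵥ (discreteCovMatrix p q *ᵥ x)) := by
  set c := ∑ i, x i * ∑' w, q i w * p w with hc
  have hmean : HasSum (fun z => (∑ i, x i * q i z) * p z) c := by
    simp only [Finset.sum_mul, mul_assoc]
    exact hasSum_sum fun i _ => (hq i).hasSum.mul_left (x i)
  have hsecond : HasSum (fun z => (∑ i, x i * q i z) ^ 2 * p z)
      (∑ i, ∑ j, x i * x j * ∑' z, q i z * q j z * p z) := by
    have hexpand : ∀ z, (∑ i, x i * q i z) ^ 2 * p z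
        = ∑ i, ∑ j, x i * x j * (q i z * q j z * p z) := fun z => by
      rw [sq, Finset.sum_mul_sum, Finset.sum_mul]
      refine sum_congr rfl fun i _ => ?_
      rw [Finset.sum_mul]
      exact sum_congr rfl fun j _ => by ring
    simp only [hexpand]
    exact hasSum_sum fun i _ => hasSum_sum fun j _ => (hqq i j).hasSum.mul_left _
  have hquad : x ⬝ᵥ (discreteCovMatrix p q *ᵥ x)
      = (∑ i, ∑ j, x i * x j * ∑' z, q i z * q j z * p z) - 2 * c * c + c ^ 2 * 1 := by
    have hc2 : c * c = ∑ i, ∑ j, x i * x j * ((∑' z, q i z * p z) * ∑' z, q j z * p z) := by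
      rw [hc, Finset.sum_mul_sum]
      exact sum_congr rfl fun i _ => sum_congr rfl fun j _ => by ring
    rw [show (∑ i, ∑ j, x i * x j * ∑' z, q i z * q j z * p z) - 2 * c * c + c ^ 2 * 1
      = (∑ i, ∑ j, x i * x j * ∑' z, q i z * q j z * p z) - c * c by ring, hc2,
      ← Finset.sum_sub_distrib]
    simp only [dotProduct, mulVec, discreteCovMatrix, of_apply, Finset.mul_sum]
    refine sum_congr rfl fun i _ => ?_
    rw [← Finset.sum_sub_distrib]
    exact sum_congr rfl fun j _ => by ring
  rw [hquad]
  exact ((hsecond.sub (hmean.mul_left (2 * c))).add (hp.mul_left (c ^ 2))).congr_fun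
    fun z => by ring

theorem discreteCovMatrix_posDef (hp : HasSum p 1) (hp0 : ∀ z, 0 ≤ p z)
    (hq : ∀ i, Summable fun z => q i z * p z)
    (hqq : ∀ i j, Summable fun z => q i z * q j z * p z)
    (hnonconst : ∀ x : ι → ℝ, x ≠ 0 →
      ∃ z, 0 < p z ∧ ∑ i, x i * q i z ≠ ∑ i, x i * ∑' w, q i w * p w) :
    (discreteCovMatrix p q).PosDef := by
  refine posDef_iff_dotProduct_mulVec.2 ⟨discreteCovMatrix_isHermitian p q, fun x hx => ?_⟩
  obtain ⟨z, hpz, hz⟩ := hnonconst x hx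
  rw [star_trivial]
  refine hasSum_lt (i := z) ?_ ?_ hasSum_zero
    (hasSum_dotProduct_discreteCovMatrix_mulVec hp hq hqq x)
  · exact fun w => mul_nonneg (sq_nonneg _) (hp0 w)
  · exact mul_pos (pow_two_pos_of_ne_zero (sub_ne_zero.2 hz)) hpz

end DiscreteCovariance

lemma poissonK_pos {θ : ℝ} (hθ : 0 < θ) (z : ℕ) : 0 < poissonK θ z := by
  unfold poissonK
  positivity

lemma hasSum_poissonK (θ : ℝ) : HasSum (poissonK θ) 1 := by
  have h := (NormedSpace.expSeries_div_hasSum_exp θ).mul_left (Real.exp (-θ))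
  rw [← Real.exp_eq_exp_ℝ, ← Real.exp_add, neg_add_cancel, Real.exp_zero] at h
  exact h.congr_fun fun z => mul_div_assoc _ _ _

lemma linearIndependent_poissonK {d : ℕ} {ϑ : Fin d → ℝ} (hϑ : Function.Injective ϑ) :
    LinearIndependent ℝ fun j => poissonK (ϑ j) := by
  refine Fintype.linearIndependent_iff.2 fun b hb => ?_
  have hmoments : (fun j => b j * Real.exp (-ϑ j)) = 0 := by
    refine eq_zero_of_forall_pow_sum_mul_pow_eq_zero hϑ fun n => ?_
    have hn : ∑ j, b j * poissonK (ϑ j) n = 0 := by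
      simpa only [Finset.sum_apply, Pi.smul_apply, smul_eq_mul, Pi.zero_apply] using congrFun hb n
    have hfac : (Nat.factorial n : ℝ) ≠ 0 := by positivity
    calc ∑ j, b j * Real.exp (-ϑ j) * ϑ j ^ (n : ℕ)
        = (∑ j, b j * poissonK (ϑ j) n) * Nat.factorial n := by
          rw [Finset.sum_mul]
          refine sum_congr rfl fun j _ => ?_
          simp only [poissonK]
          field_simp
      _ = 0 := by rw [hn, zero_mul]
  intro j
  simpa [Real.exp_ne_zero] using congrFun hmoments j

section PoissonMixture

variable {d : ℕ} {ϑ g : Fin d → ℝ}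

lemma hasSum_pf (hg1 : ∑ j, g j = 1) : HasSum (pf ϑ g) 1 := by
  have h := hasSum_sum fun j (_ : j ∈ univ) => (hasSum_poissonK (ϑ j)).mul_right (g j)
  simp only [one_mul, hg1] at h
  exact h

lemma pf_pos [NeZero d] (hϑ : ∀ j, 0 < ϑ j) (hg : ∀ j, 0 < g j) (z : ℕ) :
    0 < pf ϑ g z :=
  Finset.sum_pos (fun j _ => mul_pos (poissonK_pos (hϑ j) z) (hg j)) univ_nonempty

lemma poissonK_mul_le_pf (hϑ : ∀ j, 0 < ϑ j) (hg : ∀ j, 0 ≤ g j) (j : Fin d) (z : ℕ) :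
    poissonK (ϑ j) z * g j ≤ pf ϑ g z :=
  Finset.single_le_sum (f := fun j => poissonK (ϑ j) z * g j)
    (fun i _ => mul_nonneg (poissonK_pos (hϑ i) z).le (hg i)) (mem_univ j)

noncomputable def posterior (ϑ g : Fin d → ℝ) (j : Fin d) (z : ℕ) : ℝ :=
  poissonK (ϑ j) z * g j / pf ϑ g z

variable [NeZero d]

lemma posterior_mul_pf (hϑ : ∀ j, 0 < ϑ j) (hg : ∀ j, 0 < g j) (j : Fin d) (z : ℕ) :
    posterior ϑ g j z * pf ϑ g z = poissonK (ϑ j) z * g j :=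
  div_mul_cancel₀ _ (pf_pos hϑ hg z).ne'

lemma hasSum_posterior_mul_pf (hϑ : ∀ j, 0 < ϑ j) (hg : ∀ j, 0 < g j) (j : Fin d) :
    HasSum (fun z => posterior ϑ g j z * pf ϑ g z) (g j) := by
  simpa only [posterior_mul_pf hϑ hg, one_mul] using (hasSum_poissonK (ϑ j)).mul_right (g j)

lemma posterior_nonneg (hϑ : ∀ j, 0 < ϑ j) (hg : ∀ j, 0 < g j) (j : Fin d) (z : ℕ) :
    0 ≤ posterior ϑ g j z :=
  div_nonneg (mul_pos (poissonK_pos (hϑ j) z) (hg j)).le (pf_pos hϑ hg z).le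

lemma posterior_le_one (hϑ : ∀ j, 0 < ϑ j) (hg : ∀ j, 0 < g j) (j : Fin d) (z : ℕ) :
    posterior ϑ g j z ≤ 1 :=
  div_le_one_of_le₀ (poissonK_mul_le_pf hϑ (fun j => (hg j).le) j z) (pf_pos hϑ hg z).le

lemma summable_posterior_mul_posterior_mul_pf (hϑ : ∀ j, 0 < ϑ j) (hg : ∀ j, 0 < g j)
    (i j : Fin d) : Summable fun z => posterior ϑ g i z * posterior ϑ g j z * pf ϑ g z := by
  have hpost_pf z : 0 ≤ posterior ϑ g i z * pf ϑ g z :=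
    mul_nonneg (posterior_nonneg hϑ hg i z) (pf_pos hϑ hg z).le
  refine (hasSum_posterior_mul_pf hϑ hg i).summable.of_nonneg_of_le
    (fun z => by rw [mul_right_comm]; exact mul_nonneg (hpost_pf z) (posterior_nonneg hϑ hg j z))
    fun z => ?_
  rw [mul_right_comm]
  exact mul_le_of_le_one_right (hpost_pf z) (posterior_le_one hϑ hg j z)

end PoissonMixture

lemma LinearIndependent.exists_sum_castSucc_mul_ne_mul_sum {α : Type*} {m : ℕ}
    {k : Fin (m + 1) → α → ℝ} (hk : LinearIndependent ℝ k) {g : Fin (m + 1) → ℝ}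
    (hg : ∀ j, g j ≠ 0) {x : Fin m → ℝ} (hx : x ≠ 0) (c : ℝ) :
    ∃ z, ∑ i, x i * (k i.castSucc z * g i.castSucc) ≠ c * ∑ j, k j z * g j := by
  by_contra! h
  -- the coefficients of `∑ᵢ xᵢ kᵢ gᵢ - c ∑ⱼ kⱼ gⱼ` in the family `k`
  set b : Fin (m + 1) → ℝ := fun j => (Fin.snoc (α := fun _ => ℝ) x 0 j - c) * g j
  have hb : ∑ j, b j • k j = 0 := by
    funext z
    have hz := h z
    rw [Fin.sum_univ_castSucc, mul_add, Finset.mul_sum] at hz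
    have hsplit : ∑ i : Fin m, (x i - c) * g i.castSucc * k i.castSucc z
        = ∑ i : Fin m, x i * (k i.castSucc z * g i.castSucc)
          - ∑ i : Fin m, c * (k i.castSucc z * g i.castSucc) := by
      rw [← Finset.sum_sub_distrib]
      exact sum_congr rfl fun i _ => by ring
    simp only [Finset.sum_apply, Pi.smul_apply, smul_eq_mul, Pi.zero_apply, Fin.sum_univ_castSucc,
      b, Fin.snoc_castSucc, Fin.snoc_last, hsplit]
    linarith
  have hb0 := Fintype.linearIndependent_iff.1 hk b hb
  have hc : c = 0 := by simpa [b, hg] using hb0 (Fin.last m)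
  exact hx (funext fun i => by simpa [b, hc, hg] using hb0 i.castSucc)

/-- for a strictly positive pmf `g` on the grid `{ϑ_1,…,ϑ_{m+1}} ⊂ (0,∞)`,
the `(d−1)×(d−1)` leading principal submatrix of the posterior covariance matrix
`V_{i,j} = ∑_z g(ϑ_i|z) g(ϑ_j|z) p_g(z) − g(ϑ_i) g(ϑ_j)` is positive definite. -/
theorem posterior_cov_posDef (m : ℕ) (ϑ : Fin (m + 1) → ℝ)
    (hpos : ∀ j, 0 < ϑ j) (hmono : StrictMono ϑ)
    (g : Fin (m + 1) → ℝ) (hg : ∀ j, 0 < g j) (hg1 : ∑ j, g j = 1) :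
    Matrix.PosDef (Matrix.of fun i j : Fin m =>
      (∑' z : ℕ,
          (poissonK (ϑ i.castSucc) z * g i.castSucc / pf ϑ g z) *
            (poissonK (ϑ j.castSucc) z * g j.castSucc / pf ϑ g z) * pf ϑ g z)
        - g i.castSucc * g j.castSucc) := by
  have hp z : 0 < pf ϑ g z := pf_pos hpos hg z
  have hmean i := hasSum_posterior_mul_pf hpos hg i
  suffices (discreteCovMatrix (pf ϑ g) fun i : Fin m => posterior ϑ g i.castSucc).PosDef by
    convert this using 1
    ext i j
    simp only [discreteCovMatrix, of_apply, (hmean _).tsum_eq]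
    rfl
  refine discreteCovMatrix_posDef (hasSum_pf hg1) (fun z => (hp z).le)
    (fun i => (hmean i.castSucc).summable)
    (fun i j => summable_posterior_mul_posterior_mul_pf hpos hg i.castSucc j.castSucc)
    fun x hx => ?_
  obtain ⟨z, hz⟩ :=
    (linearIndependent_poissonK hmono.injective).exists_sum_castSucc_mul_ne_mul_sum
      (fun j => (hg j).ne') hx (∑ i, x i * g i.castSucc)
  refine ⟨z, hp z, fun hconst => hz ?_⟩
  simp only [(hmean _).tsum_eq] at hconst
  rw [← hconst, Finset.sum_mul]
  exact sum_congr rfl fun i _ => by rw [mul_assoc, ← posterior_mul_pf hpos hg]; rfl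
end

section
/- (Regret dominated by squared Euclidean distance) Let Θ_η = {ϑ_1 < ⋯ < ϑ_{d_η}} ⊂ (0,∞), let g and g' be probability mass functions on Θ_η with g'(ϑ_i) > 0 for all i, and let G* be a probability measure on (0,∞) with ∫ e^{θ(d_η²−1)} dG*(θ) < ∞ (where we assume ϑ_{d_η}/ϑ_1 ≤ d_η). Then ∑_{y∈ℕ} (θ̂_g(y) − θ̂_{g'}(y))² p_{G*}(y) ≤ C ‖g − g'‖², where C = 4 d_η ϑ_{d_η}² e^{2(ϑ_{d_η}−ϑ_1)} ∫ e^{θ(d_η²−1)} dG*(θ) and ‖·‖ is the Euclidean norm on ℝ^{d_η}. -/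
open MeasureTheory
open scoped ENNReal

/-- The Poisson mixture mass function of a measure `G` on `(0,∞)`. -/
noncomputable def pmix (G : Measure ℝ) (y : ℕ) : ℝ :=
  (∫⁻ θ, ENNReal.ofReal (poissonK θ y) ∂G).toReal

/-- The empirical Bayes estimate `θ̂_g(y) = (y+1) p_g(y+1)/p_g(y)` for a pmf `g` on a
finite grid `ϑ`. -/
noncomputable def thetaHat {d : ℕ} (ϑ : Fin d → ℝ) (g : Fin d → ℝ) (y : ℕ) : ℝ :=
  ((y : ℝ) + 1) * (∑ i, poissonK (ϑ i) (y + 1) * g i) / (∑ i, poissonK (ϑ i) y * g i)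

/-!
Write `k_i = e^{-ϑ_i} ϑ_i^y / y!`. Since `(y+1) k(y+1|θ) = θ k(y|θ)`, the estimate `θ̂_g(y)` is the
ratio `∑ ϑ_i k_i g_i / ∑ k_i g_i`. For two such ratios, Cauchy–Schwarz bounds the differences of
numerators and of denominators by `√d ϑ_d max k ‖g - g'‖` and `√d max k ‖g - g'‖`, and the
denominators are at least `min k`, so
`(θ̂_g(y) - θ̂_{g'}(y))² ≤ 4 d ϑ_d² (max k / min k)² ‖g - g'‖²`,
where `max k / min k ≤ e^{ϑ_d - ϑ_1} (ϑ_d/ϑ_1)^y ≤ e^{ϑ_d - ϑ_1} d^y`. Finally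
`∑_y d^{2y} k(y|θ) = e^{θ(d² - 1)}` is the Poisson generating function, integrated against `G*`.
-/

open Finset

theorem sq_sum_mul_le_of_abs_le {ι : Type*} [Fintype ι] {a : ι → ℝ} {A : ℝ}
    (ha : ∀ i, |a i| ≤ A) (x : ι → ℝ) :
    (∑ i, a i * x i) ^ 2 ≤ Fintype.card ι * A ^ 2 * ∑ i, x i ^ 2 := by
  have hsq : ∑ i, a i ^ 2 ≤ Fintype.card ι * A ^ 2 := by
    simpa using sum_le_card_nsmul univ (fun i => a i ^ 2) (A ^ 2) fun i _ =>
      sq_abs (a i) ▸ pow_le_pow_left₀ (abs_nonneg _) (ha i) 2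
  exact (sum_mul_sq_le_sq_mul_sq _ _ _).trans
    (mul_le_mul_of_nonneg_right hsq (sum_nonneg fun i _ => sq_nonneg _))

theorem sq_div_sub_div_le {u v P Q L b X : ℝ} (hL : 0 < L) (hLP : L ≤ P) (hQ : 0 < Q)
    (hv : |v| ≤ b * Q) (huv : (u - v) ^ 2 ≤ b ^ 2 * X) (hPQ : (P - Q) ^ 2 ≤ X) :
    (u / P - v / Q) ^ 2 ≤ 4 * b ^ 2 * X / L ^ 2 := by
  have hP : 0 < P := hL.trans_le hLP
  have hvQ : (v / Q) ^ 2 ≤ b ^ 2 := by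
    rw [← sq_abs, abs_div, abs_of_pos hQ]
    have hb : 0 ≤ b := nonneg_of_mul_nonneg_left ((abs_nonneg v).trans hv) hQ
    exact pow_le_pow_left₀ (by positivity) ((div_le_iff₀ hQ).2 hv) 2
  have hdiff : u / P - v / Q = ((u - v) - v / Q * (P - Q)) / P := by
    field_simp
    ring
  have hnum : ((u - v) - v / Q * (P - Q)) ^ 2 ≤ 4 * b ^ 2 * X := by
    have hprod : (v / Q * (P - Q)) ^ 2 ≤ b ^ 2 * X := by
      rw [mul_pow]
      exact mul_le_mul hvQ hPQ (sq_nonneg _) (sq_nonneg _ |>.trans hvQ)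
    nlinarith [sq_nonneg ((u - v) + v / Q * (P - Q))]
  rw [hdiff, div_pow]
  exact div_le_div₀ ((sq_nonneg _).trans hnum) hnum (by positivity)
    (pow_le_pow_left₀ hL.le hLP 2)

theorem sq_div_sum_sub_div_sum_le {ι : Type*} [Fintype ι] {c k g g' : ι → ℝ} {b L U : ℝ}
    (hc : ∀ i, |c i| ≤ b) (hL : 0 < L) (hkL : ∀ i, L ≤ k i) (hkU : ∀ i, k i ≤ U)
    (hg0 : ∀ i, 0 ≤ g i) (hg1 : ∑ i, g i = 1) (hg'0 : ∀ i, 0 ≤ g' i) (hg'1 : ∑ i, g' i = 1) :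
    ((∑ i, c i * k i * g i) / (∑ i, k i * g i) - (∑ i, c i * k i * g' i) / (∑ i, k i * g' i)) ^ 2
      ≤ 4 * Fintype.card ι * b ^ 2 * (U / L) ^ 2 * ∑ i, (g i - g' i) ^ 2 := by
  have hk0 : ∀ i, 0 ≤ k i := fun i => hL.le.trans (hkL i)
  have hkabs : ∀ i, |k i| ≤ U := fun i => (abs_of_nonneg (hk0 i)).trans_le (hkU i)
  have hmass : ∀ h : ι → ℝ, (∀ i, 0 ≤ h i) → ∑ i, h i = 1 → L ≤ ∑ i, k i * h i :=
    fun h h0 h1 => calc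
      L = ∑ i, L * h i := by rw [← mul_sum, h1, mul_one]
      _ ≤ ∑ i, k i * h i := sum_le_sum fun i _ => mul_le_mul_of_nonneg_right (hkL i) (h0 i)
  have hv : |∑ i, c i * k i * g' i| ≤ b * ∑ i, k i * g' i := by
    rw [mul_sum]
    refine (abs_sum_le_sum_abs _ _).trans (sum_le_sum fun i _ => ?_)
    rw [abs_mul, abs_mul, abs_of_nonneg (hk0 i), abs_of_nonneg (hg'0 i), mul_assoc]
    exact mul_le_mul_of_nonneg_right (hc i) (mul_nonneg (hk0 i) (hg'0 i))
  have huv : (∑ i, c i * k i * g i - ∑ i, c i * k i * g' i) ^ 2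
      ≤ b ^ 2 * (Fintype.card ι * U ^ 2 * ∑ i, (g i - g' i) ^ 2) := by
    have hck : ∀ i, |c i * k i| ≤ b * U := fun i => by
      rw [abs_mul]
      exact mul_le_mul (hc i) (hkabs i) (abs_nonneg _) ((abs_nonneg _).trans (hc i))
    rw [← sum_sub_distrib]
    simp only [← mul_sub]
    exact (sq_sum_mul_le_of_abs_le hck (fun i => g i - g' i)).trans_eq (by ring)
  have hPQ : (∑ i, k i * g i - ∑ i, k i * g' i) ^ 2
      ≤ Fintype.card ι * U ^ 2 * ∑ i, (g i - g' i) ^ 2 := by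
    rw [← sum_sub_distrib]
    simpa only [← mul_sub] using sq_sum_mul_le_of_abs_le hkabs (fun i => g i - g' i)
  refine (sq_div_sub_div_le hL (hmass g hg0 hg1) (hL.trans_le (hmass g' hg'0 hg'1)) hv huv
    hPQ).trans_eq ?_
  field_simp

theorem poissonK_nonneg {θ : ℝ} (hθ : 0 ≤ θ) (y : ℕ) : 0 ≤ poissonK θ y := by
  unfold poissonK
  positivity

theorem succ_mul_poissonK_succ (θ : ℝ) (y : ℕ) :
    ((y : ℝ) + 1) * poissonK θ (y + 1) = θ * poissonK θ y := by
  unfold poissonK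
  rw [Nat.factorial_succ]
  push_cast
  field_simp
  ring

theorem poissonK_ge_of_mem_Icc {a b θ : ℝ} (ha : 0 < a) (hθ : θ ∈ Set.Icc a b) (y : ℕ) :
    Real.exp (-b) * a ^ y / y.factorial ≤ poissonK θ y := by
  unfold poissonK
  gcongr
  exacts [hθ.2, hθ.1]

theorem poissonK_le_of_mem_Icc {a b θ : ℝ} (ha : 0 < a) (hθ : θ ∈ Set.Icc a b) (y : ℕ) :
    poissonK θ y ≤ Real.exp (-a) * b ^ y / y.factorial := by
  unfold poissonK
  have hθ0 : 0 ≤ θ := ha.le.trans hθ.1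
  gcongr
  exacts [hθ.1, hθ.2]

theorem thetaHat_eq_sum_mul_div_sum {d : ℕ} (ϑ g : Fin d → ℝ) (y : ℕ) :
    thetaHat ϑ g y =
      (∑ i, ϑ i * poissonK (ϑ i) y * g i) / ∑ i, poissonK (ϑ i) y * g i := by
  rw [thetaHat, mul_sum]
  simp only [← mul_assoc, succ_mul_poissonK_succ]

theorem sq_thetaHat_sub_le {d : ℕ} {ϑ g g' : Fin d → ℝ} {a b : ℝ} (ha : 0 < a)
    (hϑ : ∀ i, ϑ i ∈ Set.Icc a b)
    (hg0 : ∀ i, 0 ≤ g i) (hg1 : ∑ i, g i = 1) (hg'0 : ∀ i, 0 ≤ g' i) (hg'1 : ∑ i, g' i = 1)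
    (y : ℕ) :
    (thetaHat ϑ g y - thetaHat ϑ g' y) ^ 2
      ≤ 4 * d * b ^ 2 * Real.exp (2 * (b - a)) * ((b / a) ^ 2) ^ y * ∑ i, (g i - g' i) ^ 2 := by
  have hc : ∀ i, |ϑ i| ≤ b := fun i => (abs_of_pos (ha.trans_le (hϑ i).1)).trans_le (hϑ i).2
  have hratio : (Real.exp (-a) * b ^ y / y.factorial) / (Real.exp (-b) * a ^ y / y.factorial)
      = Real.exp (b - a) * (b / a) ^ y := by
    rw [div_pow, Real.exp_sub, Real.exp_neg, Real.exp_neg]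
    field_simp
  rw [thetaHat_eq_sum_mul_div_sum, thetaHat_eq_sum_mul_div_sum]
  refine (sq_div_sum_sub_div_sum_le hc (by positivity)
    (fun i => poissonK_ge_of_mem_Icc ha (hϑ i) y) (fun i => poissonK_le_of_mem_Icc ha (hϑ i) y)
    hg0 hg1 hg'0 hg'1).trans_eq ?_
  rw [hratio, Fintype.card_fin, mul_pow, ← Real.exp_nat_mul, ← pow_mul, ← pow_mul]
  push_cast
  ring

theorem sum_range_pow_mul_poissonK_le {t θ : ℝ} (ht : 0 ≤ t) (hθ : 0 ≤ θ) (n : ℕ) :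
    ∑ y ∈ range n, t ^ y * poissonK θ y ≤ Real.exp (θ * (t - 1)) := by
  calc ∑ y ∈ range n, t ^ y * poissonK θ y
      = Real.exp (-θ) * ∑ y ∈ range n, (t * θ) ^ y / y.factorial := by
        rw [mul_sum]
        refine sum_congr rfl fun y _ => ?_
        rw [poissonK, mul_pow]
        ring
    _ ≤ Real.exp (-θ) * Real.exp (t * θ) := by
        gcongr
        exact Real.sum_le_exp_of_nonneg (by positivity) n
    _ = Real.exp (θ * (t - 1)) := by
        rw [← Real.exp_add]
        ring_nf

theorem sum_range_pow_mul_pmix_le {G : Measure ℝ} {t : ℝ} (ht : 0 ≤ t)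
    (hG : ∀ᵐ θ ∂G, 0 ≤ θ) (hI : ∫⁻ θ, ENNReal.ofReal (Real.exp (θ * (t - 1))) ∂G ≠ ∞)
    (n : ℕ) :
    ∑ y ∈ range n, t ^ y * pmix G y
      ≤ (∫⁻ θ, ENNReal.ofReal (Real.exp (θ * (t - 1))) ∂G).toReal := by
  have hmeas : ∀ y, Measurable fun θ => ENNReal.ofReal (poissonK θ y) := fun y => by
    unfold poissonK
    fun_prop
  have hle : ∑ y ∈ range n, ∫⁻ θ, ENNReal.ofReal (t ^ y) * ENNReal.ofReal (poissonK θ y) ∂G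
      ≤ ∫⁻ θ, ENNReal.ofReal (Real.exp (θ * (t - 1))) ∂G := by
    rw [← lintegral_finsetSum _ fun y _ => (hmeas y).const_mul _]
    refine lintegral_mono_ae (hG.mono fun θ hθ => ?_)
    simp only [← ENNReal.ofReal_mul (pow_nonneg ht _)]
    rw [← ENNReal.ofReal_sum_of_nonneg fun y _ => mul_nonneg (pow_nonneg ht y)
      (poissonK_nonneg hθ y)]
    exact ENNReal.ofReal_le_ofReal (sum_range_pow_mul_poissonK_le ht hθ n)
  have hfin := ENNReal.sum_ne_top.1 (ne_top_of_le_ne_top hI hle)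
  calc ∑ y ∈ range n, t ^ y * pmix G y
      = (∑ y ∈ range n,
          ∫⁻ θ, ENNReal.ofReal (t ^ y) * ENNReal.ofReal (poissonK θ y) ∂G).toReal := by
        rw [ENNReal.toReal_sum hfin]
        refine sum_congr rfl fun y _ => ?_
        rw [lintegral_const_mul _ (hmeas y), ENNReal.toReal_mul,
          ENNReal.toReal_ofReal (pow_nonneg ht y), pmix]
    _ ≤ _ := ENNReal.toReal_mono hI hle

theorem regret_le_dist_sq_general (m : ℕ) (ϑ : Fin (m + 1) → ℝ)
    (hpos : ∀ i, 0 < ϑ i) (hmono : StrictMono ϑ)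
    (g g' : Fin (m + 1) → ℝ)
    (hg0 : ∀ i, 0 ≤ g i) (hg1 : ∑ i, g i = 1)
    (hg'0 : ∀ i, 0 < g' i) (hg'1 : ∑ i, g' i = 1)
    (G : Measure ℝ) (hG : G (Set.Ioi (0 : ℝ))ᶜ = 0)
    (hratio : ϑ (Fin.last m) / ϑ 0 ≤ ((m : ℝ) + 1))
    (hI : (∫⁻ θ, ENNReal.ofReal (Real.exp (θ * (((m : ℝ) + 1) ^ 2 - 1))) ∂G) < ⊤) :
    ∑' y : ℕ, (thetaHat ϑ g y - thetaHat ϑ g' y) ^ 2 * pmix G y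
      ≤ (4 * ((m : ℝ) + 1) * (ϑ (Fin.last m)) ^ 2 *
            Real.exp (2 * (ϑ (Fin.last m) - ϑ 0)) *
            (∫⁻ θ, ENNReal.ofReal (Real.exp (θ * (((m : ℝ) + 1) ^ 2 - 1))) ∂G).toReal) *
          ∑ i, (g i - g' i) ^ 2 := by
  set a := ϑ 0
  set b := ϑ (Fin.last m)
  set D : ℝ := (m : ℝ) + 1
  set C := 4 * D * b ^ 2 * Real.exp (2 * (b - a)) * ∑ i, (g i - g' i) ^ 2
  have hpmix : ∀ y, 0 ≤ pmix G y := fun y => ENNReal.toReal_nonneg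
  have hC : 0 ≤ C := by positivity
  have hpointwise : ∀ y, (thetaHat ϑ g y - thetaHat ϑ g' y) ^ 2 ≤ C * (D ^ 2) ^ y := fun y => by
    have hϑ : ∀ i, ϑ i ∈ Set.Icc a b :=
      fun i => ⟨hmono.monotone (Fin.zero_le i), hmono.monotone (Fin.le_last i)⟩
    have hba : (b / a) ^ 2 ≤ D ^ 2 := pow_le_pow_left₀ (div_nonneg (hpos _).le (hpos 0).le) hratio 2
    calc (thetaHat ϑ g y - thetaHat ϑ g' y) ^ 2
        ≤ 4 * (m + 1 : ℕ) * b ^ 2 * Real.exp (2 * (b - a)) * ((b / a) ^ 2) ^ y *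
            ∑ i, (g i - g' i) ^ 2 :=
          sq_thetaHat_sub_le (hpos 0) hϑ hg0 hg1 (fun i => (hg'0 i).le) hg'1 y
      _ = C * ((b / a) ^ 2) ^ y := by
          simp only [C, D]
          push_cast
          ring
      _ ≤ C * (D ^ 2) ^ y := by gcongr
  have hG' : ∀ᵐ θ ∂G, 0 ≤ θ := by
    filter_upwards [(mem_ae_iff (s := Set.Ioi 0)).2 hG] with θ hθ using le_of_lt hθ
  refine Real.tsum_le_of_sum_range_le (fun y => mul_nonneg (sq_nonneg _) (hpmix y)) fun n => ?_
  calc ∑ y ∈ range n, (thetaHat ϑ g y - thetaHat ϑ g' y) ^ 2 * pmix G y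
      ≤ C * ∑ y ∈ range n, (D ^ 2) ^ y * pmix G y := by
        rw [mul_sum]
        exact sum_le_sum fun y _ => (mul_le_mul_of_nonneg_right (hpointwise y) (hpmix y)).trans_eq
          (mul_assoc _ _ _)
    _ ≤ C * (∫⁻ θ, ENNReal.ofReal (Real.exp (θ * (D ^ 2 - 1))) ∂G).toReal :=
        mul_le_mul_of_nonneg_left (sum_range_pow_mul_pmix_le (by positivity) hG' hI.ne n)
          hC
    _ = _ := by ring

/-- the regret `∑_y (θ̂_g(y) − θ̂_{g'}(y))² p_{G*}(y)` is bounded by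
`C ‖g − g'‖²` with `C = 4 d ϑ_d² e^{2(ϑ_d − ϑ_1)} ∫ e^{θ(d²−1)} dG*(θ)`. -/
theorem regret_le_dist_sq (m : ℕ) (ϑ : Fin (m + 1) → ℝ)
    (hpos : ∀ i, 0 < ϑ i) (hmono : StrictMono ϑ)
    (g g' : Fin (m + 1) → ℝ)
    (hg0 : ∀ i, 0 ≤ g i) (hg1 : ∑ i, g i = 1)
    (hg'0 : ∀ i, 0 < g' i) (hg'1 : ∑ i, g' i = 1)
    (G : Measure ℝ) [IsProbabilityMeasure G] (hG : G (Set.Ioi (0 : ℝ))ᶜ = 0)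
    (hratio : ϑ (Fin.last m) / ϑ 0 ≤ ((m : ℝ) + 1))
    (hI : (∫⁻ θ, ENNReal.ofReal (Real.exp (θ * (((m : ℝ) + 1) ^ 2 - 1))) ∂G) < ⊤) :
    ∑' y : ℕ, (thetaHat ϑ g y - thetaHat ϑ g' y) ^ 2 * pmix G y
      ≤ (4 * ((m : ℝ) + 1) * (ϑ (Fin.last m)) ^ 2 *
            Real.exp (2 * (ϑ (Fin.last m) - ϑ 0)) *
            (∫⁻ θ, ENNReal.ofReal (Real.exp (θ * (((m : ℝ) + 1) ^ 2 - 1))) ∂G).toReal) *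
          ∑ i, (g i - g' i) ^ 2 :=
  regret_le_dist_sq_general m ϑ hpos hmono g g' hg0 hg1 hg'0 hg'1 G hG hratio hI
end
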